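/- Let c > 0, M̃ > 0, and let r : [0,T] → ℝ² satisfy the differential inequality (d/dt)(½|r(t)|²) ≥ c/2 - (M̃/(2c))|r(t)|², with |r(0)| > 0. Then for all t ∈ [0,T], |r(t)|² ≥ e^{-tM̃/c}|r(0)|² + (c²/M̃)(1 - e^{-tM̃/c}). In particular, if ε² ≤ (c²/M̃)(1 - e^{-M̃/c}) and T ≥ 1, then |r(1)| > ε. -/

import Mathlib

/-- Escape from the origin: if `(d/dt)(½|r|²) ≥ c/2 - (M̃/(2c))|r|²` on `[0,T]`
and `r(0) ≠ 0`, then `|r(t)|² ≥ e^{-tM̃/c}|r(0)|² + (c²/M̃)(1 - e^{-tM̃/c})`; in particular for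
`ε² ≤ (c²/M̃)(1 - e^{-M̃/c})` and `T ≥ 1` one has `|r(1)| > ε`. -/
theorem stmt1 (c M T : ℝ) (hc : 0 < c) (hM : 0 < M) (hT : 0 ≤ T)
    (r : ℝ → EuclideanSpace ℝ (Fin 2)) (d : ℝ → ℝ)
    (h0 : 0 < ‖r 0‖)
    (hderiv : ∀ t ∈ Set.Icc (0:ℝ) T, HasDerivAt (fun s => (1/2) * ‖r s‖ ^ 2) (d t) t)
    (hineq : ∀ t ∈ Set.Icc (0:ℝ) T, c / 2 - (M / (2 * c)) * ‖r t‖ ^ 2 ≤ d t) :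
    (∀ t ∈ Set.Icc (0:ℝ) T,
      Real.exp (-t * M / c) * ‖r 0‖ ^ 2 + (c ^ 2 / M) * (1 - Real.exp (-t * M / c))
        ≤ ‖r t‖ ^ 2) ∧
    (∀ ε : ℝ, 0 ≤ ε → ε ^ 2 ≤ (c ^ 2 / M) * (1 - Real.exp (-M / c)) → 1 ≤ T →
      ε < ‖r 1‖) := by
  set g : ℝ → ℝ := fun t => Real.exp (t * M / c) * (‖r t‖ ^ 2 - c ^ 2 / M) with hg
  have hgderiv : ∀ t ∈ Set.Icc (0:ℝ) T,
      HasDerivAt g (Real.exp (t * M / c) * (M / c) * (‖r t‖ ^ 2 - c ^ 2 / M)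
        + Real.exp (t * M / c) * (2 * d t)) t := by
    intro t ht
    have hu : HasDerivAt (fun s => ‖r s‖ ^ 2 - c ^ 2 / M) (2 * d t) t := by
      have h := ((hderiv t ht).const_mul 2).sub_const (c ^ 2 / M)
      have heq : (fun s => 2 * ((1/2) * ‖r s‖ ^ 2) - c ^ 2 / M)
          = fun s => ‖r s‖ ^ 2 - c ^ 2 / M := by
        funext s; ring
      rwa [heq] at h
    have he : HasDerivAt (fun s : ℝ => Real.exp (s * M / c))
        (Real.exp (t * M / c) * (M / c)) t := by
      have h1 : HasDerivAt (fun s : ℝ => s * M / c) (M / c) t := by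
        have := (hasDerivAt_id t).mul_const (M / c)
        simpa [mul_div_assoc] using this
      exact (Real.hasDerivAt_exp _).comp t h1
    exact he.mul hu
  have hgmono : MonotoneOn g (Set.Icc 0 T) := by
    apply monotoneOn_of_deriv_nonneg (convex_Icc 0 T)
    · exact fun t ht => (hgderiv t ht).continuousAt.continuousWithinAt
    · intro t ht
      rw [interior_Icc] at ht
      exact (hgderiv t (Set.mem_Icc_of_Ioo ht)).differentiableAt.differentiableWithinAt
    · intro t ht
      rw [interior_Icc] at ht
      have ht' := Set.mem_Icc_of_Ioo ht
      rw [(hgderiv t ht').deriv]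
      have hd := hineq t ht'
      have hexp : 0 < Real.exp (t * M / c) := Real.exp_pos _
      have hcne : c ≠ 0 := hc.ne'
      have hMne : M ≠ 0 := hM.ne'
      have h1 : (M / c) * (c ^ 2 / M) = c := by field_simp
      have h2 : (M / c) * ‖r t‖ ^ 2 = 2 * ((M / (2 * c)) * ‖r t‖ ^ 2) := by
        field_simp
      have hnn : 0 ≤ (M / c) * (‖r t‖ ^ 2 - c ^ 2 / M) + 2 * d t := by
        have hexpand : (M / c) * (‖r t‖ ^ 2 - c ^ 2 / M)
            = (M / c) * ‖r t‖ ^ 2 - (M / c) * (c ^ 2 / M) := by ring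
        rw [hexpand, h1, h2]
        linarith
      have h3 : Real.exp (t * M / c) * ((M / c) * (‖r t‖ ^ 2 - c ^ 2 / M) + 2 * d t)
          = Real.exp (t * M / c) * (M / c) * (‖r t‖ ^ 2 - c ^ 2 / M)
            + Real.exp (t * M / c) * (2 * d t) := by ring
      rw [← h3]
      exact mul_nonneg hexp.le hnn
  have key : ∀ t ∈ Set.Icc (0:ℝ) T,
      Real.exp (-t * M / c) * ‖r 0‖ ^ 2 + (c ^ 2 / M) * (1 - Real.exp (-t * M / c))
        ≤ ‖r t‖ ^ 2 := by
    intro t ht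
    have h0mem : (0:ℝ) ∈ Set.Icc (0:ℝ) T := Set.mem_Icc.mpr ⟨le_refl 0, hT⟩
    have hle := hgmono h0mem ht ht.1
    simp only [hg] at hle
    have hE : Real.exp (-t * M / c) * Real.exp (t * M / c) = 1 := by
      rw [← Real.exp_add]; ring_nf; exact Real.exp_zero
    have hexp : 0 < Real.exp (-t * M / c) := Real.exp_pos _
    have h1 : Real.exp (0 * M / c) = 1 := by norm_num
    rw [h1, one_mul] at hle
    have h2 := mul_le_mul_of_nonneg_left hle hexp.le
    have h3 : Real.exp (-t * M / c) * (Real.exp (t * M / c) * (‖r t‖ ^ 2 - c ^ 2 / M))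
        = ‖r t‖ ^ 2 - c ^ 2 / M := by
      rw [← mul_assoc, hE, one_mul]
    rw [h3] at h2
    nlinarith [h2]
  refine ⟨key, fun ε hε hε2 hT1 => ?_⟩
  have h1mem : (1:ℝ) ∈ Set.Icc (0:ℝ) T := Set.mem_Icc.mpr ⟨zero_le_one, hT1⟩
  have hk := key 1 h1mem
  have hE : (-1 : ℝ) * M / c = -M / c := by ring
  rw [hE] at hk
  have hpos : 0 < Real.exp (-M / c) * ‖r 0‖ ^ 2 :=
    mul_pos (Real.exp_pos _) (pow_pos h0 2)
  have hsq : ε ^ 2 < ‖r 1‖ ^ 2 := by linarith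
  exact lt_of_pow_lt_pow_left₀ 2 (norm_nonneg _) (by simpa [abs_of_nonneg hε] using hsq)
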